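/- Let Q be an IPSTN problem defined by a phylogeny ⟨V,E,I,S,f⟩ with root R and a function v ↦ (τ_min(v), τ_max(v)). If a set X of 2-element subsets of V↑ is admissible and there exists a real-valued function τ on V ∪ V_X such that (a) for every v ∈ V, τ_min(v) < τ(v) < τ_max(v); (b) for every v ∈ V \ {R}, τ(par(v)) < τ(v); (c) for every element v↑ of V_X, τ(par(v)) < τ(v↑) < τ(v); and (d) for every element {u↑, v↑} of X, τ(u↑) = τ(v↑); then X is a solution to Q. In particular, the set C obtained from X by replacing each symbol v↑ in every element of X with the event v↑t where t = τ(v↑) is a perfect simple set of contacts for the temporal phylogeny ⟨V,E,I,S,f,τ|_V⟩, and X is the summary of C. -/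

import Mathlib

namespace Phylo

variable {α : Type*} {ι : Type*} {σ : Type*}

/-- `y` is reachable from `x` by a directed path along edges in `E`,
all of whose vertices belong to `W`. -/
def ReachableIn (E : Set (α × α)) (W : Set α) (x y : α) : Prop :=
  ∃ (n : ℕ) (p : ℕ → α), p 0 = x ∧ p n = y ∧ (∀ j ≤ n, p j ∈ W) ∧
    ∀ j < n, (p j, p (j + 1)) ∈ E

/-- `⟨V,E⟩` is a finite rooted tree with root `R`: a finite digraph with a vertex `R`
of in-degree 0 such that every vertex different from `R` has in-degree 1 and is
reachable from `R`. -/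
structure IsRootedTree (V : Set α) (E : Set (α × α)) (R : α) : Prop where
  finite : V.Finite
  edge_fst_mem : ∀ e ∈ E, e.1 ∈ V
  edge_snd_mem : ∀ e ∈ E, e.2 ∈ V
  edge_ne : ∀ e ∈ E, e.1 ≠ e.2
  root_mem : R ∈ V
  root_no_parent : ∀ u, (u, R) ∉ E
  parent_unique : ∀ v ∈ V, v ≠ R → ∃! u, (u, v) ∈ E
  root_reaches : ∀ v ∈ V, ReachableIn E V R v

/-- The digraph with edge set `F` has a subgraph with vertex set `W` that is
a rooted tree. -/
def HasRootedSubtree (F : Set (α × α)) (W : Set α) : Prop :=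
  ∃ F' ⊆ F, (∀ e ∈ F', e.1 ∈ W ∧ e.2 ∈ W) ∧ ∃ r, IsRootedTree W F' r

/-- `v` is a leaf of `⟨V,E⟩`: a vertex of out-degree 0. -/
def IsLeaf (V : Set α) (E : Set (α × α)) (v : α) : Prop :=
  v ∈ V ∧ ∀ u, (v, u) ∉ E

/-! Networks built from a set `X` of 2-element subsets of `V↑`.
A symbol `v↑` is represented by `Sum.inr v : α ⊕ α`, while a vertex `v` of the
tree is represented by `Sum.inl v`.  An unordered pair `{u↑, v↑}` is represented
by `s(u, v) : Sym2 α`. -/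

/-- `V_X`: the union of the elements of `X`. -/
def VXset (X : Set (Sym2 α)) : Set α := {v | ∃ e ∈ X, v ∈ e}

/-- Lateral edges of the network determined by `X`: the edges `⟨u↑, v↑⟩` and
`⟨v↑, u↑⟩` for `{u↑, v↑} ∈ X`. -/
def IsLateralEdgeX (X : Set (Sym2 α)) (e : (α ⊕ α) × (α ⊕ α)) : Prop :=
  ∃ u v, s(u, v) ∈ X ∧ e = (Sum.inr u, Sum.inr v)

/-- `E_X`: obtained from `E` by replacing, for each `v↑ ∈ V_X`, the edge
`⟨par v, v⟩` with `⟨par v, v↑⟩` and `⟨v↑, v⟩`, and adding, for each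
`{u↑, v↑} ∈ X`, the lateral edges `⟨u↑, v↑⟩` and `⟨v↑, u↑⟩`. -/
def EXset (E : Set (α × α)) (par : α → α) (X : Set (Sym2 α)) :
    Set ((α ⊕ α) × (α ⊕ α)) :=
  {e | (∃ u v, (u, v) ∈ E ∧ v ∉ VXset X ∧ e = (Sum.inl u, Sum.inl v)) ∨
       (∃ v ∈ VXset X, e = (Sum.inl (par v), Sum.inr v)) ∨
       (∃ v ∈ VXset X, e = (Sum.inr v, Sum.inl v)) ∨
       IsLateralEdgeX X e}

/-- The vertex set `V ∪ V_X` of the network determined by `X`. -/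
def netVertsX (V : Set α) (X : Set (Sym2 α)) : Set (α ⊕ α) :=
  Sum.inl '' V ∪ Sum.inr '' VXset X

/-- `X` is admissible: there is a function `g : (V ∪ V_X) × I → S` agreeing with
`f` on leaves such that every nonempty set `V_is = {x : g(x,i) = s}` carries a
rooted subtree of the network `⟨V ∪ V_X, E_X⟩`. -/
def Admissible (V : Set α) (E : Set (α × α)) (par : α → α)
    (f : α → ι → σ) (X : Set (Sym2 α)) : Prop :=
  ∃ g : α ⊕ α → ι → σ,
    (∀ v, IsLeaf V E v → ∀ i, g (Sum.inl v) i = f v i) ∧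
    ∀ i s, ({x ∈ netVertsX V X | g x i = s}).Nonempty →
      HasRootedSubtree (EXset E par X) {x ∈ netVertsX V X | g x i = s}

/-! Events, contacts and the networks they determine.  An event `v↑t` is
represented by the pair `(v, t) : α × ℝ`; in a network it appears as
`Sum.inr (v, t) : α ⊕ (α × ℝ)`. -/

/-- `(v, t)` is an event of the temporal phylogeny with time function `τ`:
`v ∈ V \ {R}` and `τ(par v) < t ≤ τ(v)`. -/
def IsEvent (V : Set α) (R : α) (par : α → α) (τ : α → ℝ) (p : α × ℝ) : Prop :=
  p.1 ∈ V ∧ p.1 ≠ R ∧ τ (par p.1) < p.2 ∧ p.2 ≤ τ p.1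

/-- A contact: a set of two different concurrent events. -/
def IsContact (V : Set α) (R : α) (par : α → α) (τ : α → ℝ)
    (c : Sym2 (α × ℝ)) : Prop :=
  ¬ c.IsDiag ∧ (∀ p ∈ c, IsEvent V R par τ p) ∧ ∀ p ∈ c, ∀ q ∈ c, p.2 = q.2

/-- `V_C`: the union of the contacts in `C`. -/
def VCset (C : Set (Sym2 (α × ℝ))) : Set (α × ℝ) := {p | ∃ c ∈ C, p ∈ c}

/-- `C` is a simple set of contacts for the temporal phylogeny with time
function `τ`: a finite set of contacts such that `t < τ(v)` for every event
`v↑t` in `V_C`, and for every vertex `v` there is at most one `t` with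
`v↑t ∈ V_C`. -/
def SimpleContacts (V : Set α) (R : α) (par : α → α) (τ : α → ℝ)
    (C : Set (Sym2 (α × ℝ))) : Prop :=
  C.Finite ∧ (∀ c ∈ C, IsContact V R par τ c) ∧
    (∀ p ∈ VCset C, p.2 < τ p.1) ∧
    ∀ v t t', (v, t) ∈ VCset C → (v, t') ∈ VCset C → t = t'

/-- Lateral edges of the network determined by `C`. -/
def IsLateralEdgeC (C : Set (Sym2 (α × ℝ)))
    (e : (α ⊕ (α × ℝ)) × (α ⊕ (α × ℝ))) : Prop :=
  ∃ p q, s(p, q) ∈ C ∧ e = (Sum.inr p, Sum.inr q)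

/-- `E_C`: obtained from `E` by replacing, for each event `v↑t ∈ V_C`, the edge
`⟨par v, v⟩` with `⟨par v, v↑t⟩` and `⟨v↑t, v⟩`, and adding, for each contact
`{u↑t, v↑t} ∈ C`, the lateral edges `⟨u↑t, v↑t⟩` and `⟨v↑t, u↑t⟩`. -/
def ECset (E : Set (α × α)) (par : α → α) (C : Set (Sym2 (α × ℝ))) :
    Set ((α ⊕ (α × ℝ)) × (α ⊕ (α × ℝ))) :=
  {e | (∃ u v, (u, v) ∈ E ∧ (∀ t, (v, t) ∉ VCset C) ∧ e = (Sum.inl u, Sum.inl v)) ∨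
       (∃ p ∈ VCset C, e = (Sum.inl (par p.1), Sum.inr p)) ∨
       (∃ p ∈ VCset C, e = (Sum.inr p, Sum.inl p.1)) ∨
       IsLateralEdgeC C e}

/-- The vertex set `V ∪ V_C` of the network determined by `C`. -/
def netVertsC (V : Set α) (C : Set (Sym2 (α × ℝ))) : Set (α ⊕ (α × ℝ)) :=
  Sum.inl '' V ∪ Sum.inr '' VCset C

/-- `C` is perfect: there is `g : (V ∪ V_C) × I → S` agreeing with `f` on the
leaves such that every nonempty set `V_is = {x : g(x,i) = s}` carries a rooted
subtree of the network `⟨V ∪ V_C, E_C⟩`. -/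
def PerfectContacts (V : Set α) (E : Set (α × α)) (par : α → α)
    (f : α → ι → σ) (C : Set (Sym2 (α × ℝ))) : Prop :=
  ∃ g : α ⊕ (α × ℝ) → ι → σ,
    (∀ v, IsLeaf V E v → ∀ i, g (Sum.inl v) i = f v i) ∧
    ∀ i s, ({x ∈ netVertsC V C | g x i = s}).Nonempty →
      HasRootedSubtree (ECset E par C) {x ∈ netVertsC V C | g x i = s}

/-- The summary of a set of contacts: each event `v↑t` is replaced by `v↑`. -/
def summary (C : Set (Sym2 (α × ℝ))) : Set (Sym2 α) :=
  Sym2.map Prod.fst '' C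

/-- `X` is a solution to the IPSTN problem given by the phylogeny
`⟨V,E,I,S,f⟩` (with root `R` and parent function `par`) and the intervals
`(τmin v, τmax v)`: `X` is a set of 2-element subsets of `V↑` that is the
summary of a perfect simple set of contacts for a temporal phylogeny
`⟨V,E,I,S,f,τ⟩` with `τmin v < τ v < τmax v` for all `v ∈ V`. -/
def IsSolution (V : Set α) (E : Set (α × α)) (R : α) (par : α → α)
    (f : α → ι → σ) (τmin τmax : α → EReal) (X : Set (Sym2 α)) : Prop :=
  (∀ e ∈ X, ¬ e.IsDiag ∧ ∀ v ∈ e, v ∈ V ∧ v ≠ R) ∧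
  ∃ τ : α → ℝ,
    (∀ e ∈ E, τ e.1 < τ e.2) ∧
    (∀ v ∈ V, τmin v < (τ v : EReal) ∧ (τ v : EReal) < τmax v) ∧
    ∃ C : Set (Sym2 (α × ℝ)),
      SimpleContacts V R par τ C ∧ PerfectContacts V E par f C ∧ X = summary C

/-- Condition (ii) of Proposition 1: a real-valued function `τ` on `V ∪ V_X`
(represented as a function on `α ⊕ α`, with `Sum.inl v` standing for `v` and
`Sum.inr v` for `v↑`) satisfying (a)–(d). -/
def TimeAssignment (V : Set α) (R : α) (par : α → α)
    (τmin τmax : α → EReal) (X : Set (Sym2 α)) (τ : α ⊕ α → ℝ) : Prop :=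
  (∀ v ∈ V, τmin v < (τ (Sum.inl v) : EReal) ∧ (τ (Sum.inl v) : EReal) < τmax v) ∧
  (∀ v ∈ V, v ≠ R → τ (Sum.inl (par v)) < τ (Sum.inl v)) ∧
  (∀ v ∈ VXset X, τ (Sum.inl (par v)) < τ (Sum.inr v) ∧ τ (Sum.inr v) < τ (Sum.inl v)) ∧
  ∀ u v, s(u, v) ∈ X → τ (Sum.inr u) = τ (Sum.inr v)

/-! Placing every `v↑` of an admissible `X` at its own time `t v` turns `X` into a set of
contacts `C` whose network is an isomorphic copy of the network of `X` (the isomorphism is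
`v ↦ v`, `v↑ ↦ v↑t(v)`), so trees in one transport to trees in the other and the character
assignment witnessing admissibility witnesses perfection.  Condition (d) makes the two events
of each pair concurrent, (c) makes them events strictly before their vertices, and (b) together
with uniqueness of parents makes `τ` increase along the edges of the tree. -/

section Transport

variable {β : Type*}

theorem ReachableIn.image (Ψ : α → β) {E : Set (α × α)} {W : Set α} {x y : α}
    (h : ReachableIn E W x y) :
    ReachableIn (Prod.map Ψ Ψ '' E) (Ψ '' W) (Ψ x) (Ψ y) := by
  obtain ⟨n, p, h0, hn, hW, hE⟩ := h
  exact ⟨n, Ψ ∘ p, by simp [h0], by simp [hn], fun j hj => ⟨p j, hW j hj, rfl⟩,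
    fun j hj => ⟨(p j, p (j + 1)), hE j hj, rfl⟩⟩

theorem IsRootedTree.image {Ψ : α → β} (hΨ : Function.Injective Ψ)
    {W : Set α} {F : Set (α × α)} {r : α} (h : IsRootedTree W F r) :
    IsRootedTree (Ψ '' W) (Prod.map Ψ Ψ '' F) (Ψ r) where
  finite := h.finite.image Ψ
  edge_fst_mem := by rintro _ ⟨a, ha, rfl⟩; exact ⟨a.1, h.edge_fst_mem a ha, rfl⟩
  edge_snd_mem := by rintro _ ⟨a, ha, rfl⟩; exact ⟨a.2, h.edge_snd_mem a ha, rfl⟩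
  edge_ne := by rintro _ ⟨a, ha, rfl⟩ heq; exact h.edge_ne a ha (hΨ heq)
  root_mem := ⟨r, h.root_mem, rfl⟩
  root_no_parent := by
    rintro _ ⟨⟨u, v⟩, huv, heq⟩
    obtain rfl : v = r := hΨ (congrArg Prod.snd heq)
    exact h.root_no_parent u huv
  parent_unique := by
    rintro _ ⟨v, hv, rfl⟩ hne
    obtain ⟨u, hu, huniq⟩ := h.parent_unique v hv (fun h' => hne (congrArg Ψ h'))
    refine ⟨Ψ u, ⟨(u, v), hu, rfl⟩, ?_⟩
    rintro _ ⟨⟨u', v'⟩, hu'v', heq⟩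
    obtain rfl : v' = v := hΨ (congrArg Prod.snd heq)
    rw [← huniq u' hu'v']
    exact (congrArg Prod.fst heq).symm
  root_reaches := by
    rintro _ ⟨v, hv, rfl⟩
    exact (h.root_reaches v hv).image Ψ

theorem HasRootedSubtree.image {Ψ : α → β} (hΨ : Function.Injective Ψ)
    {F : Set (α × α)} {G : Set (β × β)} (hFG : ∀ e ∈ F, Prod.map Ψ Ψ e ∈ G) {W : Set α}
    (h : HasRootedSubtree F W) : HasRootedSubtree G (Ψ '' W) := by
  obtain ⟨F', hF'F, hF'W, r, hr⟩ := h
  refine ⟨Prod.map Ψ Ψ '' F', ?_, ?_, Ψ r, hr.image hΨ⟩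
  · rintro _ ⟨e, he, rfl⟩
    exact hFG e (hF'F he)
  · rintro _ ⟨e, he, rfl⟩
    exact ⟨⟨e.1, (hF'W e he).1, rfl⟩, ⟨e.2, (hF'W e he).2, rfl⟩⟩

end Transport

theorem IsRootedTree.fst_eq_par {V : Set α} {E : Set (α × α)} {R : α} {par : α → α}
    (hT : IsRootedTree V E R) (hpar : ∀ v ∈ V, v ≠ R → (par v, v) ∈ E) {e : α × α}
    (he : e ∈ E) : e.1 = par e.2 := by
  have hV : e.2 ∈ V := hT.edge_snd_mem e he
  have hR : e.2 ≠ R := fun h => hT.root_no_parent e.1 (h ▸ he)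
  exact (hT.parent_unique e.2 hV hR).unique he (hpar e.2 hV hR)

theorem finite_of_forall_mem_finite {V : Set α} (hV : V.Finite) {X : Set (Sym2 α)}
    (h : ∀ e ∈ X, ∀ v ∈ e, v ∈ V) : X.Finite :=
  hV.toFinset.sym2.finite_toSet.subset fun e he =>
    Finset.mem_sym2_iff.2 fun v hv => hV.mem_toFinset.2 (h e he v hv)

def contactsOf (t : α → ℝ) (X : Set (Sym2 α)) : Set (Sym2 (α × ℝ)) :=
  Sym2.map (fun v => (v, t v)) '' X

def timedVertex (t : α → ℝ) : α ⊕ α → α ⊕ (α × ℝ) :=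
  Sum.map id fun v => (v, t v)

section ContactsOf

variable (t : α → ℝ) (X : Set (Sym2 α))

theorem timedVertex_injective : Function.Injective (timedVertex t) :=
  Function.injective_id.sumMap fun _ _ h => congrArg Prod.fst h

theorem VCset_contactsOf : VCset (contactsOf t X) = (fun v => (v, t v)) '' VXset X := by
  ext p
  constructor
  · rintro ⟨_, ⟨e, he, rfl⟩, hp⟩
    obtain ⟨v, hv, rfl⟩ := Sym2.mem_map.1 hp
    exact ⟨v, ⟨e, he, hv⟩, rfl⟩
  · rintro ⟨v, ⟨e, he, hv⟩, rfl⟩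
    exact ⟨_, ⟨e, he, rfl⟩, Sym2.mem_map.2 ⟨v, hv, rfl⟩⟩

theorem summary_contactsOf : summary (contactsOf t X) = X := by
  have hmap : ∀ e : Sym2 α, Sym2.map Prod.fst (Sym2.map (fun v => (v, t v)) e) = e := by
    intro e
    rw [Sym2.map_map]
    exact congrFun Sym2.map_id' e
  simp only [summary, contactsOf, Set.image_image, hmap, Set.image_id']

theorem netVertsC_contactsOf (V : Set α) :
    netVertsC V (contactsOf t X) = timedVertex t '' netVertsX V X := by
  simp only [netVertsC, netVertsX, VCset_contactsOf, Set.image_union, Set.image_image]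
  rfl

theorem timedVertex_mem_ECset {E : Set (α × α)} {par : α → α} {e : (α ⊕ α) × (α ⊕ α)}
    (he : e ∈ EXset E par X) :
    Prod.map (timedVertex t) (timedVertex t) e ∈ ECset E par (contactsOf t X) := by
  have hVC : ∀ v ∈ VXset X, (v, t v) ∈ VCset (contactsOf t X) := fun v hv => by
    rw [VCset_contactsOf]
    exact ⟨v, hv, rfl⟩
  rcases he with ⟨u, v, huv, hv, rfl⟩ | ⟨v, hv, rfl⟩ | ⟨v, hv, rfl⟩ | ⟨u, v, huv, rfl⟩
  · refine Or.inl ⟨u, v, huv, fun s hs => hv ?_, rfl⟩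
    rw [VCset_contactsOf] at hs
    obtain ⟨w, hw, hwv⟩ := hs
    obtain rfl : w = v := congrArg Prod.fst hwv
    exact hw
  · exact Or.inr (Or.inl ⟨_, hVC v hv, rfl⟩)
  · exact Or.inr (Or.inr (Or.inl ⟨_, hVC v hv, rfl⟩))
  · exact Or.inr (Or.inr (Or.inr ⟨_, _, ⟨s(u, v), huv, Sym2.map_mk _ u v⟩, rfl⟩))

theorem perfectContacts_contactsOf {ι σ : Type*} {V : Set α} {E : Set (α × α)}
    {par : α → α} {f : α → ι → σ} (hX : Admissible V E par f X) :
    PerfectContacts V E par f (contactsOf t X) := by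
  obtain ⟨g, hleaf, htree⟩ := hX
  let g' : α ⊕ (α × ℝ) → ι → σ := fun x => g (Sum.map id Prod.fst x)
  have hg' : ∀ y, g' (timedVertex t y) = g y := by rintro (_ | _) <;> rfl
  have hclass : ∀ i s, {x ∈ netVertsC V (contactsOf t X) | g' x i = s} =
      timedVertex t '' {x ∈ netVertsX V X | g x i = s} := by
    intro i s
    rw [netVertsC_contactsOf]
    ext x
    constructor
    · rintro ⟨⟨y, hy, rfl⟩, hgy⟩
      exact ⟨y, ⟨hy, hg' y ▸ hgy⟩, rfl⟩
    · rintro ⟨y, ⟨hy, hgy⟩, rfl⟩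
      exact ⟨⟨y, hy, rfl⟩, (hg' y).symm ▸ hgy⟩
  refine ⟨g', hleaf, fun i s hne => ?_⟩
  rw [hclass] at hne ⊢
  exact (htree i s hne.of_image).image (timedVertex_injective t)
    fun e he => timedVertex_mem_ECset t X he

end ContactsOf

section Simple

variable {V : Set α} {R : α} {par : α → α} {τ t : α → ℝ} {X : Set (Sym2 α)}

theorem isContact_map
    (hX : ∀ e ∈ X, ¬ e.IsDiag ∧ ∀ v ∈ e, v ∈ V ∧ v ≠ R)
    (ht : ∀ v ∈ VXset X, τ (par v) < t v ∧ t v < τ v)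
    (hconc : ∀ u v, s(u, v) ∈ X → t u = t v) {e : Sym2 α} (he : e ∈ X) :
    IsContact V R par τ (Sym2.map (fun v => (v, t v)) e) := by
  induction e using Sym2.ind with
  | _ u v =>
  obtain ⟨hdiag, hmem⟩ := hX _ he
  have hevent : ∀ w ∈ s(u, v), IsEvent V R par τ (w, t w) := fun w hw =>
    ⟨(hmem w hw).1, (hmem w hw).2, (ht w ⟨_, he, hw⟩).1, (ht w ⟨_, he, hw⟩).2.le⟩
  have htime : ∀ w ∈ s(u, v), t w = t u := by
    simp only [Sym2.mem_iff]
    rintro w (rfl | rfl)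
    exacts [rfl, (hconc _ _ he).symm]
  refine ⟨fun h => hdiag ?_, ?_, ?_⟩
  · rw [Sym2.map_mk, Sym2.mk_isDiag_iff] at h
    exact Sym2.mk_isDiag_iff.2 (congrArg Prod.fst h)
  · simp only [Sym2.mem_map]
    rintro _ ⟨w, hw, rfl⟩
    exact hevent w hw
  · simp only [Sym2.mem_map]
    rintro _ ⟨w, hw, rfl⟩ _ ⟨w', hw', rfl⟩
    exact (htime w hw).trans (htime w' hw').symm

theorem simpleContacts_contactsOf (hV : V.Finite)
    (hX : ∀ e ∈ X, ¬ e.IsDiag ∧ ∀ v ∈ e, v ∈ V ∧ v ≠ R)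
    (ht : ∀ v ∈ VXset X, τ (par v) < t v ∧ t v < τ v)
    (hconc : ∀ u v, s(u, v) ∈ X → t u = t v) :
    SimpleContacts V R par τ (contactsOf t X) := by
  refine ⟨?_, ?_, ?_, ?_⟩
  · exact (finite_of_forall_mem_finite hV fun e he v hv => ((hX e he).2 v hv).1).image _
  · rintro _ ⟨e, he, rfl⟩
    exact isContact_map hX ht hconc he
  · rw [VCset_contactsOf]
    rintro _ ⟨v, hv, rfl⟩
    exact (ht v hv).2
  · simp only [VCset_contactsOf, Set.mem_image, Prod.mk.injEq]
    rintro v _ _ ⟨_, _, rfl, rfl⟩ ⟨_, _, rfl, rfl⟩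
    rfl

end Simple

theorem ipstn_admissible_and_timeAssignment_implies_solution_general
    {α ι σ : Type*}
    (V : Set α) (E : Set (α × α)) (R : α) (par : α → α) (f : α → ι → σ)
    (τmin τmax : α → EReal)
    (hT : IsRootedTree V E R)
    (hpar : ∀ v ∈ V, v ≠ R → (par v, v) ∈ E)
    (X : Set (Sym2 α))
    (hX : ∀ e ∈ X, ¬ e.IsDiag ∧ ∀ v ∈ e, v ∈ V ∧ v ≠ R)
    (hadm : Admissible V E par f X)
    (τ : α ⊕ α → ℝ)
    (hτ : TimeAssignment V R par τmin τmax X τ) :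
    IsSolution V E R par f τmin τmax X ∧
      SimpleContacts V R par (fun v => τ (Sum.inl v))
        (Sym2.map (fun v => (v, τ (Sum.inr v))) '' X) ∧
      PerfectContacts V E par f
        (Sym2.map (fun v => (v, τ (Sum.inr v))) '' X) ∧
      X = summary (Sym2.map (fun v => (v, τ (Sum.inr v))) '' X) := by
  obtain ⟨hbounds, hparent, hevent, hconc⟩ := hτ
  have hmono : ∀ e ∈ E, τ (Sum.inl e.1) < τ (Sum.inl e.2) := fun e he => by
    have hR : e.2 ≠ R := fun h => hT.root_no_parent e.1 (h ▸ he)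
    rw [hT.fst_eq_par hpar he]
    exact hparent e.2 (hT.edge_snd_mem e he) hR
  have hsimple :=
    simpleContacts_contactsOf (τ := fun v => τ (Sum.inl v)) hT.finite hX hevent hconc
  have hperfect := perfectContacts_contactsOf (fun v => τ (Sum.inr v)) X hadm
  have hsummary := (summary_contactsOf (fun v => τ (Sum.inr v)) X).symm
  exact ⟨⟨hX, _, hmono, hbounds, _, hsimple, hperfect, hsummary⟩, hsimple, hperfect, hsummary⟩

/-- Proposition 1, right-to-left.  If `X` is admissible and
there is a real-valued function `τ` on `V ∪ V_X` satisfying (a)–(d), then `X`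
is a solution to `Q`; in particular, the set `C` obtained from `X` by replacing
each symbol `v↑` with the event `v↑t` where `t = τ(v↑)` is a perfect simple
set of contacts for the temporal phylogeny `⟨V,E,I,S,f,τ|_V⟩`, and `X` is the
summary of `C`. -/
theorem ipstn_admissible_and_timeAssignment_implies_solution
    {α ι σ : Type*} [Finite ι] [Finite σ]
    (V : Set α) (E : Set (α × α)) (R : α) (par : α → α) (f : α → ι → σ)
    (τmin τmax : α → EReal)
    (hT : IsRootedTree V E R)
    (hpar : ∀ v ∈ V, v ≠ R → (par v, v) ∈ E)
    (hint : ∀ v ∈ V, τmin v < τmax v)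
    (X : Set (Sym2 α))
    (hX : ∀ e ∈ X, ¬ e.IsDiag ∧ ∀ v ∈ e, v ∈ V ∧ v ≠ R)
    (hadm : Admissible V E par f X)
    (τ : α ⊕ α → ℝ)
    (hτ : TimeAssignment V R par τmin τmax X τ) :
    IsSolution V E R par f τmin τmax X ∧
      SimpleContacts V R par (fun v => τ (Sum.inl v))
        (Sym2.map (fun v => (v, τ (Sum.inr v))) '' X) ∧
      PerfectContacts V E par f
        (Sym2.map (fun v => (v, τ (Sum.inr v))) '' X) ∧
      X = summary (Sym2.map (fun v => (v, τ (Sum.inr v))) '' X) :=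
  ipstn_admissible_and_timeAssignment_implies_solution_general V E R par f τmin τmax hT hpar X hX
    hadm τ hτ

end Phylo
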